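/- arXiv:1903.11230 — 2 statements merged into one kernel-verified Lean document; each statement's English description precedes it below -/
import Mathlib

section
/- Let R_{ijkl} be an algebraic curvature tensor on ℝ^n and let 0 ≤ ν ≤ n. Then the trace of the endomorphism A_ν of Λ^ν(ℝ^n) equals C(n−2, ν−1)·S, where S is the scalar curvature of R. -/
open ExteriorAlgebra

/-- The wedge `e_{ι 0} ∧ ⋯ ∧ e_{ι (ν-1)}` of standard basis vectors of `ℝ^n`,
as an element of the `ν`-th exterior power `⋀[ℝ]^ν (ℝ^n)`. -/
noncomputable def stdWedge (n ν : ℕ) (ι : Fin ν → Fin n) : ⋀[ℝ]^ν (Fin n → ℝ) :=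
  ⟨ExteriorAlgebra.ιMulti ℝ ν (fun a => Pi.single (ι a) (1 : ℝ)),
   ExteriorAlgebra.ιMulti_range ℝ ν ⟨_, rfl⟩⟩

/-- The Ricci tensor `Ric_{ij} = ∑_p R_{ipjp}` of an algebraic curvature tensor
(indices raised with the Kronecker delta). -/
def ricci (n : ℕ) (R : Fin n → Fin n → Fin n → Fin n → ℝ) (i j : Fin n) : ℝ :=
  ∑ p : Fin n, R i p j p

/-- The scalar curvature `S = ∑_i Ric_{ii}`. -/
def scalarCurv (n : ℕ) (R : Fin n → Fin n → Fin n → Fin n → ℝ) : ℝ :=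
  ∑ i : Fin n, ricci n R i i

/-- Binomial coefficient `C(m, k)` defined for all integers, with the convention
that it vanishes if `m < 0`, `k < 0` or `m < k`. -/
def chooseZ (m k : ℤ) : ℤ :=
  if 0 ≤ m ∧ 0 ≤ k ∧ k ≤ m then (m.toNat.choose k.toNat : ℤ) else 0

/-- The value prescribed for the endomorphism `A_ν` of formula (7.2) of the paper on
the basis wedge `e_{ι 0} ∧ ⋯ ∧ e_{ι (ν-1)}`:
`A_ν = ∑_a A^a_ν − 2 ∑_{a<b} A^{ab}_ν`, where `A^a_ν` replaces the `a`-th factor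
`e_{i_a}` by `∑_p Ric_{i_a p} e_p`, and `A^{ab}_ν` replaces the factors `e_{i_a}`,
`e_{i_b}` by `e_p`, `e_q` with coefficient `R_{i_a p i_b q}`. -/
noncomputable def AnuVal (n ν : ℕ) (R : Fin n → Fin n → Fin n → Fin n → ℝ)
    (ι : Fin ν → Fin n) : ⋀[ℝ]^ν (Fin n → ℝ) :=
  (∑ a : Fin ν, ∑ p : Fin n,
      ricci n R (ι a) p • stdWedge n ν (Function.update ι a p)) -
    (2 : ℝ) • ∑ a : Fin ν, ∑ b : Fin ν,
      if a < b then
        ∑ p : Fin n, ∑ q : Fin n,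
          R (ι a) p (ι b) q •
            stdWedge n ν (Function.update (Function.update ι a p) b q)
      else 0

/-!
In the basis `e_s` of `Λ^ν(ℝ^n)` indexed by `ν`-subsets `s = {i_1 < ⋯ < i_ν}`, the diagonal entry
of `A_ν` at `e_s` is computed term by term: `A^a_ν` contributes only through `p = i_a`, giving
`Ric_{i_a i_a}`, and `A^{ab}_ν` only through `(p, q) = (i_a, i_b)` and `(i_b, i_a)`, giving
`R_{i_a i_a i_b i_b} - R_{i_a i_b i_b i_a} = R_{i_a i_b i_a i_b}`. Hence the entry is
`∑_{i ∈ s} Ric_{ii} - ∑_{i, j ∈ s} R_{ijij} = ∑_{i ∈ s} ∑_{j ∉ s} R_{ijij}`.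
Summing over `s`, an ordered pair `i ≠ j` is counted once for each of the `C(n-2, ν-1)` subsets
containing `i` but not `j`, and `∑_{i,j} R_{ijij} = S`.
-/

open Finset Function

lemma chooseZ_natCast (m k : ℕ) : chooseZ m k = m.choose k := by
  unfold chooseZ
  split_ifs with h
  · simp
  · rw [Nat.choose_eq_zero_of_lt (by omega), Nat.cast_zero]

section Counting

variable {α : Type*} [Fintype α] [DecidableEq α]

lemma card_filter_mem_notMem_powersetCard {i j : α} (hij : i ≠ j) (k : ℕ) :
    (#{s ∈ powersetCard k univ | i ∈ s ∧ j ∉ s} : ℤ) =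
      chooseZ (Fintype.card α - 2) (k - 1) := by
  have hcard : 2 ≤ Fintype.card α := by
    simpa [card_pair hij] using card_le_univ ({i, j} : Finset α)
  cases k with
  | zero => simp [chooseZ]
  | succ m =>
    have hfilter : ({s ∈ powersetCard (m + 1) univ | i ∈ s ∧ j ∉ s} : Finset (Finset α)) =
        {s ∈ powersetCard (m + 1) (univ.erase j) | {i} ⊆ s} := by
      ext s
      simp only [mem_filter, mem_powersetCard, subset_univ, true_and, singleton_subset_iff,
        subset_erase]
      tauto
    rw [hfilter, card_filter_powersetCard_subset _ _ _ (by simpa using hij) (by simp),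
      card_erase_of_mem (mem_univ j), card_singleton, card_univ,
      show ((Fintype.card α : ℤ) - 2) = ((Fintype.card α - 2 : ℕ) : ℤ) by omega,
      show ((m + 1 : ℕ) : ℤ) - 1 = (m : ℕ) by omega, chooseZ_natCast, Nat.sub_sub,
      Nat.add_sub_cancel]

lemma sum_powersetCard_sum_mem_sum_notMem {R : Type*} [CommRing R] (K : α → α → R)
    (hK : ∀ i, K i i = 0) (k : ℕ) :
    ∑ s ∈ powersetCard k univ, ∑ i ∈ s, ∑ j ∈ sᶜ, K i j =
      chooseZ (Fintype.card α - 2) (k - 1) * ∑ i, ∑ j, K i j := by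
  have hind : ∀ s : Finset α, ∑ i ∈ s, ∑ j ∈ sᶜ, K i j =
      ∑ i, ∑ j, if i ∈ s ∧ j ∉ s then K i j else 0 := by
    intro s
    simp only [ite_and, ← ite_sum_zero, ← sum_filter, filter_univ_mem, filter_notMem_eq_sdiff,
      compl_eq_univ_sdiff]
  simp only [hind]
  rw [sum_comm, mul_sum]
  refine sum_congr rfl fun i _ => ?_
  rw [sum_comm, mul_sum]
  refine sum_congr rfl fun j _ => ?_
  rcases eq_or_ne i j with rfl | hij
  · simp [hK]
  · rw [sum_ite, sum_const, sum_const_zero, add_zero, nsmul_eq_mul,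
      ← card_filter_mem_notMem_powersetCard hij, Int.cast_natCast]

end Counting

lemma two_nsmul_sum_sum_ite_lt {ι M : Type*} [Fintype ι] [LinearOrder ι] [AddCommMonoid M]
    (f : ι → ι → M) (hsymm : ∀ a b, f a b = f b a) (hdiag : ∀ a, f a a = 0) :
    2 • ∑ a, ∑ b, (if a < b then f a b else 0) = ∑ a, ∑ b, f a b := by
  have hsplit : ∀ a b, f a b = (if a < b then f a b else 0) + (if b < a then f b a else 0) := by
    intro a b
    rcases lt_trichotomy a b with h | rfl | h
    · simp [h, h.not_gt]
    · simp [hdiag]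
    · simp [h, h.not_gt, hsymm a b]
  calc 2 • ∑ a, ∑ b, (if a < b then f a b else 0)
      = ∑ a, ∑ b, (if a < b then f a b else 0) + ∑ a, ∑ b, (if b < a then f b a else 0) := by
        rw [two_nsmul]
        congr 1
        exact sum_comm
    _ = ∑ a, ∑ b, f a b := by simp only [← sum_add_distrib, ← hsplit]

lemma Set.powersetCard.sum_ofFinEmbEquiv_symm {α M : Type*} [LinearOrder α] [AddCommMonoid M]
    {k : ℕ} (s : Set.powersetCard α k) (g : α → M) :
    ∑ a, g (ofFinEmbEquiv.symm s a) = ∑ i ∈ s.val, g i := by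
  conv_rhs => rw [← map_orderEmbOfFin_univ s.val (card_eq s), sum_map]
  rfl

open Set.powersetCard (ofFinEmbEquiv mem_range_ofFinEmbEquiv_symm_iff_mem sum_ofFinEmbEquiv_symm)

lemma LinearMap.trace_eq_sum_repr {S M ι : Type*} [CommRing S] [AddCommGroup M] [Module S M]
    [Fintype ι] [DecidableEq ι] (b : Module.Basis ι S M) (f : M →ₗ[S] M) :
    LinearMap.trace S M f = ∑ i, b.repr (f (b i)) i := by
  simp only [LinearMap.trace_eq_matrix_trace S b f, Matrix.trace, Matrix.diag_apply,
    LinearMap.toMatrix_apply]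

noncomputable def wedgeBasis (n ν : ℕ) :
    Module.Basis (Set.powersetCard (Fin n) ν) ℝ (⋀[ℝ]^ν (Fin n → ℝ)) :=
  (Pi.basisFun ℝ (Fin n)).exteriorPower ν

section WedgeBasis

variable {n ν : ℕ}

lemma stdWedge_eq_ιMulti (κ : Fin ν → Fin n) :
    stdWedge n ν κ = exteriorPower.ιMulti ℝ ν (fun a => (Pi.single (κ a) 1 : Fin n → ℝ)) :=
  rfl

lemma stdWedge_comp_swap (κ : Fin ν → Fin n) {a b : Fin ν} (hab : a ≠ b) :
    stdWedge n ν (κ ∘ Equiv.swap a b) = - stdWedge n ν κ :=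
  (exteriorPower.ιMulti ℝ ν).map_swap (fun c => (Pi.single (κ c) 1 : Fin n → ℝ)) hab

lemma wedgeBasis_apply (s : Set.powersetCard (Fin n) ν) :
    wedgeBasis n ν s = stdWedge n ν (ofFinEmbEquiv.symm s) := by
  rw [wedgeBasis, exteriorPower.basis_apply, exteriorPower.ιMulti_family, comp_def]
  simp only [Pi.basisFun_apply]
  rfl

lemma wedgeBasis_repr_stdWedge_self (s : Set.powersetCard (Fin n) ν) :
    (wedgeBasis n ν).repr (stdWedge n ν (ofFinEmbEquiv.symm s)) s = 1 := by
  rw [← wedgeBasis_apply, Module.Basis.repr_self, Finsupp.single_eq_same]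

lemma wedgeBasis_repr_stdWedge_eq_zero {s : Set.powersetCard (Fin n) ν} {κ : Fin ν → Fin n}
    {i : Fin n} (his : i ∈ s) (hiκ : i ∉ Set.range κ) :
    (wedgeBasis n ν).repr (stdWedge n ν κ) s = 0 := by
  obtain ⟨c, rfl⟩ := (mem_range_ofFinEmbEquiv_symm_iff_mem s i).mpr his
  rw [wedgeBasis, exteriorPower.basis_repr_apply, stdWedge_eq_ιMulti,
    exteriorPower.ιMultiDual_apply_ιMulti]
  refine Matrix.det_eq_zero_of_column_eq_zero c fun a => ?_
  simp only [Matrix.of_apply, Module.Basis.coord_apply, Pi.basisFun_repr, Pi.single_apply,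
    ite_eq_right_iff, one_ne_zero, imp_false]
  exact fun h => hiκ ⟨a, h.symm⟩

lemma wedgeBasis_repr_stdWedge_update (s : Set.powersetCard (Fin n) ν) (a : Fin ν) (p : Fin n) :
    (wedgeBasis n ν).repr (stdWedge n ν (update (ofFinEmbEquiv.symm s) a p)) s =
      if p = ofFinEmbEquiv.symm s a then 1 else 0 := by
  set ι := ofFinEmbEquiv.symm s
  split_ifs with hp
  · rw [hp, update_eq_self, wedgeBasis_repr_stdWedge_self]
  · refine wedgeBasis_repr_stdWedge_eq_zero (i := ι a)
      ((mem_range_ofFinEmbEquiv_symm_iff_mem s _).mp ⟨a, rfl⟩) ?_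
    rintro ⟨c, hc⟩
    rcases eq_or_ne c a with rfl | hca
    · exact hp (by rwa [update_self] at hc)
    · exact hca (ι.injective (by rwa [update_of_ne hca] at hc))

lemma wedgeBasis_repr_stdWedge_update_update (s : Set.powersetCard (Fin n) ν) {a b : Fin ν}
    (hab : a ≠ b) (p q : Fin n) :
    (wedgeBasis n ν).repr
        (stdWedge n ν (update (update (ofFinEmbEquiv.symm s) a p) b q)) s =
      (if p = ofFinEmbEquiv.symm s a ∧ q = ofFinEmbEquiv.symm s b then 1 else 0) -
        (if p = ofFinEmbEquiv.symm s b ∧ q = ofFinEmbEquiv.symm s a then 1 else 0) := by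
  set ι := ofFinEmbEquiv.symm s
  have hι : ι a ≠ ι b := ι.injective.ne hab
  by_cases hid : p = ι a ∧ q = ι b
  · obtain ⟨rfl, rfl⟩ := hid
    rw [update_eq_self, update_eq_self, wedgeBasis_repr_stdWedge_self, if_pos ⟨rfl, rfl⟩,
      if_neg (by tauto), sub_zero]
  by_cases hswap : p = ι b ∧ q = ι a
  · obtain ⟨rfl, rfl⟩ := hswap
    have : update (update ι a (ι b)) b (ι a) = ι ∘ Equiv.swap a b := by
      ext c
      simp only [update_apply, comp_apply, Equiv.swap_apply_def]
      split_ifs <;> simp_all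
    rw [this, stdWedge_comp_swap _ hab, map_neg, Finsupp.neg_apply,
      wedgeBasis_repr_stdWedge_self, if_neg hid, if_pos ⟨rfl, rfl⟩, zero_sub]
  rw [if_neg hid, if_neg hswap, sub_zero]
  have hmem : ∀ c, ι c ∈ s := fun c => (mem_range_ofFinEmbEquiv_symm_iff_mem s _).mp ⟨c, rfl⟩
  by_contra hne
  have hrange : ∀ c, ι c ∈ Set.range (update (update ι a p) b q) := fun c => by
    by_contra h
    exact hne (wedgeBasis_repr_stdWedge_eq_zero (hmem c) h)
  -- `ι a` and `ι b` are both values of the updated map, which forces `{p, q} = {ι a, ι b}`.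
  obtain ⟨c, hc⟩ := hrange a
  obtain ⟨d, hd⟩ := hrange b
  simp only [update_apply] at hc hd
  have ha : p = ι a ∨ q = ι a := by
    split_ifs at hc with h₁ h₂
    exacts [.inr hc, .inl hc, absurd (ι.injective hc) h₂]
  have hb : p = ι b ∨ q = ι b := by
    split_ifs at hd with h₁ h₂
    exacts [.inr hd, .inl hd, absurd (ι.injective hd) h₁]
  grind

lemma wedgeBasis_repr_sum_update (s : Set.powersetCard (Fin n) ν) (a : Fin ν)
    (c : Fin n → ℝ) :
    (wedgeBasis n ν).repr
        (∑ p, c p • stdWedge n ν (update (ofFinEmbEquiv.symm s) a p)) s =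
      c (ofFinEmbEquiv.symm s a) := by
  simp only [map_sum, map_smul, Finsupp.coe_finsetSum, Finsupp.coe_smul, Finset.sum_apply,
    Pi.smul_apply, wedgeBasis_repr_stdWedge_update, smul_eq_mul, mul_ite, mul_one, mul_zero,
    sum_ite_eq', mem_univ, if_true]

lemma wedgeBasis_repr_sum_update_update (s : Set.powersetCard (Fin n) ν) {a b : Fin ν}
    (hab : a ≠ b) (c : Fin n → Fin n → ℝ) :
    (wedgeBasis n ν).repr
        (∑ p, ∑ q, c p q • stdWedge n ν (update (update (ofFinEmbEquiv.symm s) a p) b q)) s =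
      c (ofFinEmbEquiv.symm s a) (ofFinEmbEquiv.symm s b) -
        c (ofFinEmbEquiv.symm s b) (ofFinEmbEquiv.symm s a) := by
  simp only [map_sum, map_smul, Finsupp.coe_finsetSum, Finsupp.coe_smul, Finset.sum_apply,
    Pi.smul_apply, wedgeBasis_repr_stdWedge_update_update s hab, smul_eq_mul, mul_sub,
    sum_sub_distrib, ite_and, mul_ite, mul_one, mul_zero, sum_ite_irrel, sum_const_zero,
    sum_ite_eq', mem_univ, if_true]

end WedgeBasis

section Curvature

variable {n ν : ℕ} {R : Fin n → Fin n → Fin n → Fin n → ℝ}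

lemma wedgeBasis_repr_AnuVal_self (s : Set.powersetCard (Fin n) ν) :
    (wedgeBasis n ν).repr (AnuVal n ν R (ofFinEmbEquiv.symm s)) s =
      ∑ a, ricci n R (ofFinEmbEquiv.symm s a) (ofFinEmbEquiv.symm s a) -
        2 * ∑ a, ∑ b, if a < b then
          R (ofFinEmbEquiv.symm s a) (ofFinEmbEquiv.symm s a)
            (ofFinEmbEquiv.symm s b) (ofFinEmbEquiv.symm s b) -
          R (ofFinEmbEquiv.symm s a) (ofFinEmbEquiv.symm s b)
            (ofFinEmbEquiv.symm s b) (ofFinEmbEquiv.symm s a) else 0 := by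
  rw [AnuVal, map_sub, map_smul, Finsupp.sub_apply, Finsupp.smul_apply, smul_eq_mul, map_sum,
    Finsupp.finsetSum_apply, map_sum, Finsupp.finsetSum_apply]
  congr 1
  · exact sum_congr rfl fun a _ => wedgeBasis_repr_sum_update s a _
  · congr 1
    refine sum_congr rfl fun a _ => ?_
    rw [map_sum, Finsupp.finsetSum_apply]
    refine sum_congr rfl fun b _ => ?_
    split_ifs with hab
    · exact wedgeBasis_repr_sum_update_update s hab.ne _
    · simp

lemma wedgeBasis_repr_AnuVal_self_eq_sum_sum_compl
    (hskew₁ : ∀ i j k l, R i j k l = - R j i k l) (hskew₂ : ∀ i j k l, R i j k l = - R i j l k)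
    (s : Set.powersetCard (Fin n) ν) :
    (wedgeBasis n ν).repr (AnuVal n ν R (ofFinEmbEquiv.symm s)) s =
      ∑ i ∈ s.val, ∑ j ∈ s.valᶜ, R i j i j := by
  have hterm : ∀ x y, R x x y y - R x y y x = R x y x y := fun x y => by
    linarith [hskew₁ x x y y, hskew₂ x y y x]
  have hsymm : ∀ x y, R x y x y = R y x y x := fun x y => by
    linarith [hskew₁ x y x y, hskew₂ y x x y]
  have hdiag : ∀ x, R x x x x = 0 := fun x => by linarith [hskew₁ x x x x]
  set ι := ofFinEmbEquiv.symm s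
  rw [wedgeBasis_repr_AnuVal_self]
  simp only [hterm]
  rw [two_mul, ← two_nsmul, two_nsmul_sum_sum_ite_lt (fun a b => R (ι a) (ι b) (ι a) (ι b))
      (fun a b => hsymm _ _) (fun a => hdiag _)]
  rw [sum_congr rfl fun a _ => sum_ofFinEmbEquiv_symm s (fun j => R (ι a) j (ι a) j),
    sum_ofFinEmbEquiv_symm s (fun i => ∑ j ∈ s.val, R i j i j),
    sum_ofFinEmbEquiv_symm s (fun i => ricci n R i i)]
  simp only [ricci, ← sum_add_sum_compl s.val, sum_add_distrib]
  ring

end Curvature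

theorem trace_Anu_general (n ν : ℕ)
    (R : Fin n → Fin n → Fin n → Fin n → ℝ)
    (hskew₁ : ∀ i j k l, R i j k l = - R j i k l)
    (hskew₂ : ∀ i j k l, R i j k l = - R i j l k)
    (A : ⋀[ℝ]^ν (Fin n → ℝ) →ₗ[ℝ] ⋀[ℝ]^ν (Fin n → ℝ))
    (hA : ∀ ι : Fin ν → Fin n, A (stdWedge n ν ι) = AnuVal n ν R ι) :
    LinearMap.trace ℝ _ A = (chooseZ ((n : ℤ) - 2) ((ν : ℤ) - 1) : ℝ) * scalarCurv n R := by
  have hdiag : ∀ i, R i i i i = 0 := fun i => by linarith [hskew₁ i i i i]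
  calc LinearMap.trace ℝ _ A
      = ∑ s : Set.powersetCard (Fin n) ν, ∑ i ∈ s.val, ∑ j ∈ s.valᶜ, R i j i j := by
        rw [LinearMap.trace_eq_sum_repr (wedgeBasis n ν)]
        refine sum_congr rfl fun s _ => ?_
        rw [wedgeBasis_apply, hA, wedgeBasis_repr_AnuVal_self_eq_sum_sum_compl hskew₁ hskew₂]
    _ = ∑ s ∈ powersetCard ν univ, ∑ i ∈ s, ∑ j ∈ sᶜ, R i j i j :=
        (sum_subtype _ (by simp) fun s : Finset (Fin n) => ∑ i ∈ s, ∑ j ∈ sᶜ, R i j i j).symm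
    _ = (chooseZ ((n : ℤ) - 2) ((ν : ℤ) - 1) : ℝ) * scalarCurv n R := by
        rw [sum_powersetCard_sum_mem_sum_notMem (fun i j => R i j i j) hdiag, Fintype.card_fin]
        rfl

/-- Formula (7.6) of the paper: `Tr A_ν = C(n-2, ν-1) · S`. -/
theorem trace_Anu (n ν : ℕ) (hn : 1 ≤ n) (hν : ν ≤ n)
    (R : Fin n → Fin n → Fin n → Fin n → ℝ)
    (hskew₁ : ∀ i j k l, R i j k l = - R j i k l)
    (hskew₂ : ∀ i j k l, R i j k l = - R i j l k)
    (hpair : ∀ i j k l, R i j k l = R k l i j)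
    (hbianchi : ∀ i j k l, R i j k l + R i k l j + R i l j k = 0)
    (A : ⋀[ℝ]^ν (Fin n → ℝ) →ₗ[ℝ] ⋀[ℝ]^ν (Fin n → ℝ))
    (hA : ∀ ι : Fin ν → Fin n, A (stdWedge n ν ι) = AnuVal n ν R ι) :
    LinearMap.trace ℝ _ A = (chooseZ ((n : ℤ) - 2) ((ν : ℤ) - 1) : ℝ) * scalarCurv n R :=
  trace_Anu_general n ν R hskew₁ hskew₂ A hA
end

section
/- Let R_{ijkl} be an algebraic curvature tensor on ℝ^{n+1} such that R_{ijkl} = 0 whenever at least one of the indices i,j,k,l equals n+1, and let R'_{ijkl} (1 ≤ i,j,k,l ≤ n) denote its restriction, which is an algebraic curvature tensor on ℝ^n. Then for every 0 ≤ ν ≤ n+1 the subspaces Λ^ν(ℝ^n) and Λ^{ν−1}(ℝ^n)∧e_{n+1} of Λ^ν(ℝ^{n+1}) are invariant under A_ν(R), the restriction of A_ν(R) to the first summand equals A_ν(R'), the restriction to the second summand is conjugate to A_{ν−1}(R'), and consequently Tr(A_ν(R)²) = Tr(A_ν(R')²) + Tr(A_{ν−1}(R')²). -/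
open ExteriorAlgebra

set_option synthInstance.maxHeartbeats 1000000
set_option maxHeartbeats 1000000

/-- The inclusion `ℝ^n → ℝ^{n+1}` (extension by zero in the last coordinate). -/
def incl (n : ℕ) : (Fin n → ℝ) →ₗ[ℝ] (Fin (n + 1) → ℝ) where
  toFun w i := if h : (i : ℕ) < n then w ⟨i, h⟩ else 0
  map_add' w w' := by funext i; by_cases h : (i : ℕ) < n <;> simp [h]
  map_smul' c w := by funext i; by_cases h : (i : ℕ) < n <;> simp [h]

/-- The subspace `Λ^ν(ℝ^n)` of `Λ^ν(ℝ^{n+1})` (image under the map of exterior algebras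
induced by the inclusion `ℝ^n → ℝ^{n+1}`), as a submodule of the exterior algebra. -/
noncomputable def firstSummand (n ν : ℕ) : Submodule ℝ (ExteriorAlgebra ℝ (Fin (n + 1) → ℝ)) :=
  Submodule.map (ExteriorAlgebra.map (incl n)).toLinearMap (⋀[ℝ]^ν (Fin n → ℝ))

/-- The subspace `Λ^{ν-1}(ℝ^n) ∧ e_{n+1}` of `Λ^ν(ℝ^{n+1})`, as a submodule of the
exterior algebra. -/
noncomputable def secondSummand (n ν : ℕ) : Submodule ℝ (ExteriorAlgebra ℝ (Fin (n + 1) → ℝ)) :=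
  Submodule.map
    (LinearMap.mulRight ℝ (ExteriorAlgebra.ι ℝ (Pi.single (Fin.last n) (1 : ℝ))))
    (Submodule.map (ExteriorAlgebra.map (incl n)).toLinearMap (⋀[ℝ]^(ν - 1) (Fin n → ℝ)))

/-!
Write `ℝ^{n+1} = ℝ^n ⊕ ℝ e` with `e = e_{n+1}`. Since `R` has no component along `e`, `A_ν(R)`
sends a wedge of basis vectors of `ℝ^n` to `A_ν(R')` of it, and a wedge `x ∧ e` to
`A_{ν-1}(R')(x) ∧ e`: every term of the defining formula that moves or contracts the slot
holding `e` vanishes. Contraction on the right with the last coordinate functional separates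
`Λ^ν(ℝ^n)` from `Λ^{ν-1}(ℝ^n) ∧ e`, so the two embeddings assemble into an injection
`Λ^ν(ℝ^n) × Λ^{ν-1}(ℝ^n) → Λ^ν(ℝ^{n+1})`, which is an isomorphism by Pascal's rule for the
dimensions. It conjugates `A_ν(R)` to `A_ν(R') × A_{ν-1}(R')`, whence the trace identity.
-/

namespace ExteriorAlgebra

variable {R M N : Type*} [CommRing R] [AddCommGroup M] [Module R M] [AddCommGroup N] [Module R N]

theorem ιMulti_succ_eq_ιMulti_castSucc_mul {k : ℕ} (v : Fin (k + 1) → M) :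
    ιMulti R (k + 1) v = ιMulti R k (fun a => v a.castSucc) * ι R (v (Fin.last k)) := by
  rw [ιMulti_apply, ιMulti_apply, List.ofFn_succ', List.prod_concat]

open CliffordAlgebra in
theorem contractRight_map_eq_zero {f : M →ₗ[R] N} {d : Module.Dual R N} (hd : d ∘ₗ f = 0)
    (y : ExteriorAlgebra R M) : contractRight (Q := (0 : QuadraticForm R N)) (map f y) d = 0 := by
  induction y using CliffordAlgebra.right_induction with
  | algebraMap r => rw [AlgHom.commutes, contractRight_algebraMap]
  | add x y hx hy => rw [map_add, map_add, LinearMap.add_apply, hx, hy, add_zero]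
  | mul_ι m x hx =>
    rw [map_mul, map_apply_ι, contractRight_mul_ι, hx, zero_mul, sub_zero,
      ← LinearMap.comp_apply, hd, LinearMap.zero_apply, zero_smul]

theorem map_eq_zero_of_map_add_map_mul_ι_eq_zero {f : M →ₗ[R] N} {d : Module.Dual R N}
    (hd : d ∘ₗ f = 0) {e : N} (he : d e = 1) {y₁ y₂ : ExteriorAlgebra R M}
    (h : map f y₁ + map f y₂ * ι R e = 0) : map f y₁ = 0 ∧ map f y₂ = 0 := by
  have h₂ : map f y₂ = 0 := by
    simpa [contractRight_map_eq_zero hd, CliffordAlgebra.contractRight_mul_ι, he] using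
      congrArg (fun x => CliffordAlgebra.contractRight (Q := (0 : QuadraticForm R N)) x d) h
  rw [h₂, zero_mul, add_zero] at h
  exact ⟨h, h₂⟩

end ExteriorAlgebra

namespace exteriorPower

variable {R M N : Type*} [CommRing R] [AddCommGroup M] [Module R M] [AddCommGroup N] [Module R N]

theorem coe_map (k : ℕ) (f : M →ₗ[R] N) (x : ⋀[R]^k M) :
    (map k f x : ExteriorAlgebra R N) = ExteriorAlgebra.map f x := by
  have : (⋀[R]^k N).subtype ∘ₗ map k f = (ExteriorAlgebra.map f).toLinearMap ∘ₗ (⋀[R]^k M).subtype :=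
    linearMap_ext (by ext v; simp [ExteriorAlgebra.map_apply_ιMulti])
  exact LinearMap.congr_fun this x

theorem mul_ι_mem {k : ℕ} {x : ExteriorAlgebra R M} (hx : x ∈ ⋀[R]^k M) (v : M) :
    x * ExteriorAlgebra.ι R v ∈ ⋀[R]^(k + 1) M := by
  rw [ExteriorAlgebra.exteriorPower, pow_succ]
  exact Submodule.mul_mem_mul hx (LinearMap.mem_range_self _ v)

noncomputable def mulι (k : ℕ) (v : M) : ⋀[R]^k M →ₗ[R] ⋀[R]^(k + 1) M :=
  LinearMap.codRestrict _ (LinearMap.mulRight R (ExteriorAlgebra.ι R v) ∘ₗ (⋀[R]^k M).subtype)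
    fun x => mul_ι_mem x.2 v

@[simp]
theorem coe_mulι (k : ℕ) (v : M) (x : ⋀[R]^k M) :
    (mulι k v x : ExteriorAlgebra R M) = x * ExteriorAlgebra.ι R v :=
  rfl

theorem finrank_fin_fun [Nontrivial R] (n k : ℕ) :
    Module.finrank R (⋀[R]^k (Fin n → R)) = n.choose k := by
  rw [finrank_eq, Module.finrank_fin_fun]

end exteriorPower

theorem LinearMap.trace_comp_self_eq_of_comp_eq {R M N : Type*} [CommRing R] [AddCommGroup M]
    [Module R M] [AddCommGroup N] [Module R N] [Module.Free R M] [Module.Finite R M]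
    (e : M ≃ₗ[R] N) {A : N →ₗ[R] N} {B : M →ₗ[R] M} (h : A ∘ₗ e = e ∘ₗ B) :
    trace R N (A ∘ₗ A) = trace R M (B ∘ₗ B) := by
  have hA : A = e.conj B := by
    rw [LinearEquiv.conj_apply, ← h]
    ext x
    simp
  rw [hA, ← LinearEquiv.conj_comp, trace_conj']

open exteriorPower

noncomputable abbrev eLast (n : ℕ) : Fin (n + 1) → ℝ := Pi.single (Fin.last n) 1

theorem incl_injective (n : ℕ) : Function.Injective (incl n) := by
  intro w w' h
  funext i
  simpa [incl] using congr_fun h i.castSucc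

theorem incl_single (n : ℕ) (i : Fin n) : incl n (Pi.single i 1) = Pi.single i.castSucc 1 := by
  funext j
  induction j using Fin.lastCases with
  | last => simp [incl]
  | cast j => simp [incl, Pi.single_apply]

theorem stdWedge_castSucc (n ν : ℕ) (ι : Fin ν → Fin n) :
    stdWedge (n + 1) ν (fun a => (ι a).castSucc) = map ν (incl n) (stdWedge n ν ι) := by
  ext1
  simp [coe_map, stdWedge, ExteriorAlgebra.map_apply_ιMulti, Function.comp_def, incl_single]

theorem stdWedge_snoc (n ν : ℕ) (ι : Fin ν → Fin n) :
    stdWedge (n + 1) (ν + 1) (Fin.snoc (fun a => (ι a).castSucc) (Fin.last n)) =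
      mulι ν (eLast n) (map ν (incl n) (stdWedge n ν ι)) := by
  ext1
  rw [coe_mulι, ← stdWedge_castSucc]
  simp only [stdWedge, ExteriorAlgebra.ιMulti_succ_eq_ιMulti_castSucc_mul, Fin.snoc_castSucc,
    Fin.snoc_last]

theorem span_range_stdWedge (m ν : ℕ) : Submodule.span ℝ (Set.range (stdWedge m ν)) = ⊤ := by
  rw [eq_top_iff, ← ιMulti_span_of_span ℝ ν (Fin m → ℝ) (Pi.basisFun ℝ (Fin m)).span_eq]
  refine Submodule.span_mono ?_
  rintro _ ⟨a, ha, rfl⟩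
  choose ι hι using Set.range_subset_iff.1 ha
  obtain rfl : a = fun k => Pi.single (ι k) 1 := funext fun k => by rw [← hι, Pi.basisFun_apply]
  exact ⟨ι, rfl⟩

noncomputable def splitLast (n k : ℕ) :
    (⋀[ℝ]^(k + 1) (Fin n → ℝ) × ⋀[ℝ]^k (Fin n → ℝ)) →ₗ[ℝ] ⋀[ℝ]^(k + 1) (Fin (n + 1) → ℝ) :=
  (map (k + 1) (incl n)).coprod (mulι k (eLast n) ∘ₗ map k (incl n))

theorem splitLast_injective (n k : ℕ) : Function.Injective (splitLast n k) := by
  rw [← LinearMap.ker_eq_bot, LinearMap.ker_eq_bot']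
  rintro ⟨y₁, y₂⟩ h
  have hd : LinearMap.proj (Fin.last n) ∘ₗ incl n = 0 := by ext; simp [incl]
  have h' : ExteriorAlgebra.map (incl n) (y₁ : ExteriorAlgebra ℝ (Fin n → ℝ)) +
      ExteriorAlgebra.map (incl n) (y₂ : ExteriorAlgebra ℝ (Fin n → ℝ)) *
        ExteriorAlgebra.ι ℝ (eLast n) = 0 := by
    simpa [splitLast, coe_map] using congrArg Subtype.val h
  obtain ⟨h₁, h₂⟩ := ExteriorAlgebra.map_eq_zero_of_map_add_map_mul_ι_eq_zero hd (by simp) h'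
  have hinj := ExteriorAlgebra.map_injective_field (LinearMap.ker_eq_bot.2 (incl_injective n))
  exact Prod.ext (Subtype.ext (hinj (by simpa using h₁))) (Subtype.ext (hinj (by simpa using h₂)))

/-- Surjectivity is free: both sides have dimension `C(n+1, k+1) = C(n, k+1) + C(n, k)`. -/
noncomputable def splitLastEquiv (n k : ℕ) :
    (⋀[ℝ]^(k + 1) (Fin n → ℝ) × ⋀[ℝ]^k (Fin n → ℝ)) ≃ₗ[ℝ] ⋀[ℝ]^(k + 1) (Fin (n + 1) → ℝ) :=
  (splitLast n k).linearEquivOfInjective (splitLast_injective n k) <| by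
    rw [Module.finrank_prod, finrank_fin_fun, finrank_fin_fun, finrank_fin_fun,
      Nat.choose_succ_succ', add_comm]

theorem coe_splitLastEquiv (n k : ℕ) :
    (splitLastEquiv n k : _ →ₗ[ℝ] _) = splitLast n k :=
  LinearMap.ext fun x => LinearMap.linearEquivOfInjective_apply _ _ x

theorem coe_mem_firstSummand_iff {n ν : ℕ} (x : ⋀[ℝ]^ν (Fin (n + 1) → ℝ)) :
    (x : ExteriorAlgebra ℝ (Fin (n + 1) → ℝ)) ∈ firstSummand n ν ↔
      x ∈ LinearMap.range (map ν (incl n)) := by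
  constructor
  · rintro ⟨y, hy, hxy⟩
    exact ⟨⟨y, hy⟩, Subtype.ext (by rw [coe_map]; exact hxy)⟩
  · rintro ⟨y, rfl⟩
    exact ⟨y, y.2, (coe_map _ _ _).symm⟩

theorem coe_mem_secondSummand_iff {n ν : ℕ} (x : ⋀[ℝ]^(ν + 1) (Fin (n + 1) → ℝ)) :
    (x : ExteriorAlgebra ℝ (Fin (n + 1) → ℝ)) ∈ secondSummand n (ν + 1) ↔
      x ∈ LinearMap.range (mulι ν (eLast n) ∘ₗ map ν (incl n)) := by
  constructor
  · rintro ⟨_, ⟨y, hy, rfl⟩, hxy⟩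
    exact ⟨⟨y, hy⟩, Subtype.ext (by simpa [coe_map] using hxy)⟩
  · rintro ⟨y, rfl⟩
    exact ⟨_, ⟨y, y.2, rfl⟩, by simp [coe_map]⟩

theorem Anu_eq_zero_of_degree_zero {m : ℕ} {R : Fin m → Fin m → Fin m → Fin m → ℝ}
    {A : ⋀[ℝ]^0 (Fin m → ℝ) →ₗ[ℝ] ⋀[ℝ]^0 (Fin m → ℝ)}
    (hA : ∀ ι : Fin 0 → Fin m, A (stdWedge m 0 ι) = AnuVal m 0 R ι) : A = 0 := by
  refine LinearMap.ext_on_range (span_range_stdWedge m 0) fun ι => ?_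
  simp [hA, AnuVal]

section VanishingOnLast

variable {n : ℕ} {R : Fin (n + 1) → Fin (n + 1) → Fin (n + 1) → Fin (n + 1) → ℝ}

abbrev restrictLast (R : Fin (n + 1) → Fin (n + 1) → Fin (n + 1) → Fin (n + 1) → ℝ) :
    Fin n → Fin n → Fin n → Fin n → ℝ :=
  fun i j k l => R i.castSucc j.castSucc k.castSucc l.castSucc

/-- `R` is the curvature tensor of a product `M × ℝ`. -/
def VanishesOnLast (R : Fin (n + 1) → Fin (n + 1) → Fin (n + 1) → Fin (n + 1) → ℝ) : Prop :=
  ∀ i j k l, (i = Fin.last n ∨ j = Fin.last n ∨ k = Fin.last n ∨ l = Fin.last n) → R i j k l = 0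

theorem update_castSucc {ν : ℕ} (ι : Fin ν → Fin n) (a : Fin ν) (p : Fin n) :
    Function.update (fun b => (ι b).castSucc) a p.castSucc =
      fun b => (Function.update ι a p b).castSucc :=
  (Function.comp_update Fin.castSucc ι a p).symm

theorem AnuVal_castSucc (hR : VanishesOnLast R) {ν : ℕ} (ι : Fin ν → Fin n) :
    AnuVal (n + 1) ν R (fun a => (ι a).castSucc) =
      map ν (incl n) (AnuVal n ν (restrictLast R) ι) := by
  unfold VanishesOnLast at hR
  simp [AnuVal, ricci, restrictLast, Fin.sum_univ_castSucc, hR, map_sum, ← stdWedge_castSucc, update_castSucc,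
    apply_ite]

theorem AnuVal_snoc (hR : VanishesOnLast R) {ν : ℕ} (ι : Fin ν → Fin n) :
    AnuVal (n + 1) (ν + 1) R (Fin.snoc (fun a => (ι a).castSucc) (Fin.last n)) =
      mulι ν (eLast n) (map ν (incl n) (AnuVal n ν (restrictLast R) ι)) := by
  unfold VanishesOnLast at hR
  simp [AnuVal, ricci, restrictLast, Fin.sum_univ_castSucc, hR, map_sum, ← stdWedge_snoc, update_castSucc,
    apply_ite, ← Fin.snoc_update, Fin.update_snoc_last]

variable {ν : ℕ}

theorem Anu_comp_map_incl (hR : VanishesOnLast R)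
    {A : ⋀[ℝ]^ν (Fin (n + 1) → ℝ) →ₗ[ℝ] ⋀[ℝ]^ν (Fin (n + 1) → ℝ)}
    (hA : ∀ ι, A (stdWedge (n + 1) ν ι) = AnuVal (n + 1) ν R ι)
    {A' : ⋀[ℝ]^ν (Fin n → ℝ) →ₗ[ℝ] ⋀[ℝ]^ν (Fin n → ℝ)}
    (hA' : ∀ ι, A' (stdWedge n ν ι) = AnuVal n ν (restrictLast R) ι) :
    A ∘ₗ map ν (incl n) = map ν (incl n) ∘ₗ A' :=
  LinearMap.ext_on_range (span_range_stdWedge n ν) fun ι => by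
    simp only [LinearMap.comp_apply, ← stdWedge_castSucc, hA, hA', AnuVal_castSucc hR]

variable {A : ⋀[ℝ]^(ν + 1) (Fin (n + 1) → ℝ) →ₗ[ℝ] ⋀[ℝ]^(ν + 1) (Fin (n + 1) → ℝ)}

theorem range_Anu_comp_mulι_map_incl_le (hR : VanishesOnLast R)
    (hA : ∀ ι, A (stdWedge (n + 1) (ν + 1) ι) = AnuVal (n + 1) (ν + 1) R ι) :
    LinearMap.range (A ∘ₗ mulι ν (eLast n) ∘ₗ map ν (incl n)) ≤
      LinearMap.range (mulι ν (eLast n) ∘ₗ map ν (incl n)) := by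
  rw [LinearMap.range_eq_map, ← span_range_stdWedge, Submodule.map_span, Submodule.span_le]
  rintro _ ⟨_, ⟨ι, rfl⟩, rfl⟩
  exact ⟨AnuVal n ν (restrictLast R) ι, by
    simp only [LinearMap.comp_apply, ← stdWedge_snoc, hA, AnuVal_snoc hR]⟩

theorem Anu_comp_mulι_map_incl (hR : VanishesOnLast R)
    (hA : ∀ ι, A (stdWedge (n + 1) (ν + 1) ι) = AnuVal (n + 1) (ν + 1) R ι)
    {A'' : ⋀[ℝ]^ν (Fin n → ℝ) →ₗ[ℝ] ⋀[ℝ]^ν (Fin n → ℝ)}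
    (hA'' : ∀ ι, A'' (stdWedge n ν ι) = AnuVal n ν (restrictLast R) ι) :
    A ∘ₗ mulι ν (eLast n) ∘ₗ map ν (incl n) = (mulι ν (eLast n) ∘ₗ map ν (incl n)) ∘ₗ A'' :=
  LinearMap.ext_on_range (span_range_stdWedge n ν) fun ι => by
    simp only [LinearMap.comp_apply, ← stdWedge_snoc, hA, hA'', AnuVal_snoc hR]

theorem Anu_comp_splitLastEquiv (hR : VanishesOnLast R)
    (hA : ∀ ι, A (stdWedge (n + 1) (ν + 1) ι) = AnuVal (n + 1) (ν + 1) R ι)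
    {A' : ⋀[ℝ]^(ν + 1) (Fin n → ℝ) →ₗ[ℝ] ⋀[ℝ]^(ν + 1) (Fin n → ℝ)}
    (hA' : ∀ ι, A' (stdWedge n (ν + 1) ι) = AnuVal n (ν + 1) (restrictLast R) ι)
    {A'' : ⋀[ℝ]^ν (Fin n → ℝ) →ₗ[ℝ] ⋀[ℝ]^ν (Fin n → ℝ)}
    (hA'' : ∀ ι, A'' (stdWedge n ν ι) = AnuVal n ν (restrictLast R) ι) :
    A ∘ₗ splitLastEquiv n ν = splitLastEquiv n ν ∘ₗ A'.prodMap A'' := by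
  rw [coe_splitLastEquiv, splitLast, LinearMap.comp_coprod, Anu_comp_map_incl hR hA hA',
    Anu_comp_mulι_map_incl hR hA hA'']
  ext x <;> simp

end VanishingOnLast

theorem trace_Anu_sq_product_decomposition_general (n ν : ℕ)
    (R : Fin (n + 1) → Fin (n + 1) → Fin (n + 1) → Fin (n + 1) → ℝ)
    (hvanish : ∀ i j k l,
      (i = Fin.last n ∨ j = Fin.last n ∨ k = Fin.last n ∨ l = Fin.last n) →
        R i j k l = 0)
    (A : ⋀[ℝ]^ν (Fin (n + 1) → ℝ) →ₗ[ℝ] ⋀[ℝ]^ν (Fin (n + 1) → ℝ))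
    (hA : ∀ ι : Fin ν → Fin (n + 1), A (stdWedge (n + 1) ν ι) = AnuVal (n + 1) ν R ι)
    (A' : ⋀[ℝ]^ν (Fin n → ℝ) →ₗ[ℝ] ⋀[ℝ]^ν (Fin n → ℝ))
    (hA' : ∀ ι : Fin ν → Fin n,
      A' (stdWedge n ν ι) =
        AnuVal n ν
          (fun i j k l => R i.castSucc j.castSucc k.castSucc l.castSucc) ι) :
    -- invariance of the first summand `Λ^ν(ℝ^n)`
    (∀ x : ⋀[ℝ]^ν (Fin (n + 1) → ℝ),
      (x : ExteriorAlgebra ℝ (Fin (n + 1) → ℝ)) ∈ firstSummand n ν →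
        ((A x : ExteriorAlgebra ℝ (Fin (n + 1) → ℝ)) ∈ firstSummand n ν)) ∧
    -- the restriction of `A_ν(R)` to the first summand is `A_ν(R')`
    (∀ ι : Fin ν → Fin n,
      (A (stdWedge (n + 1) ν (fun a => (ι a).castSucc)) :
          ExteriorAlgebra ℝ (Fin (n + 1) → ℝ)) =
        ExteriorAlgebra.map (incl n)
          (A' (stdWedge n ν ι) : ExteriorAlgebra ℝ (Fin n → ℝ))) ∧
    -- invariance of the second summand `Λ^{ν-1}(ℝ^n) ∧ e_{n+1}`
    (∀ x : ⋀[ℝ]^ν (Fin (n + 1) → ℝ),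
      (x : ExteriorAlgebra ℝ (Fin (n + 1) → ℝ)) ∈ secondSummand n ν →
        ((A x : ExteriorAlgebra ℝ (Fin (n + 1) → ℝ)) ∈ secondSummand n ν)) ∧
    -- for `ν = ν' + 1`: the restriction to the second summand is conjugate to
    -- `A_{ν-1}(R')` via `x ↦ x ∧ e_{n+1}`, and the trace identity holds
    (∀ ν' : ℕ, ν = ν' + 1 →
      ∀ A'' : ⋀[ℝ]^ν' (Fin n → ℝ) →ₗ[ℝ] ⋀[ℝ]^ν' (Fin n → ℝ),
        (∀ ι : Fin ν' → Fin n,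
          A'' (stdWedge n ν' ι) =
            AnuVal n ν'
              (fun i j k l => R i.castSucc j.castSucc k.castSucc l.castSucc) ι) →
        (∀ ι : Fin ν' → Fin n,
          (A (stdWedge (n + 1) ν
              (fun a => if h : (a : ℕ) < ν' then (ι ⟨a, h⟩).castSucc else Fin.last n)) :
              ExteriorAlgebra ℝ (Fin (n + 1) → ℝ)) =
            ExteriorAlgebra.map (incl n)
                (A'' (stdWedge n ν' ι) : ExteriorAlgebra ℝ (Fin n → ℝ)) *
              ExteriorAlgebra.ι ℝ (Pi.single (Fin.last n) (1 : ℝ))) ∧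
        LinearMap.trace ℝ _ (A ∘ₗ A) =
          LinearMap.trace ℝ _ (A' ∘ₗ A') + LinearMap.trace ℝ _ (A'' ∘ₗ A'')) ∧
    -- for `ν = 0` the second summand does not contribute (`A_{-1} = 0`)
    (ν = 0 → LinearMap.trace ℝ _ (A ∘ₗ A) = LinearMap.trace ℝ _ (A' ∘ₗ A')) := by
  refine ⟨fun x hx => ?_, fun ι => ?_, fun x hx => ?_, ?_, ?_⟩
  · rw [coe_mem_firstSummand_iff] at hx ⊢
    obtain ⟨y, rfl⟩ := hx
    exact ⟨A' y, (LinearMap.congr_fun (Anu_comp_map_incl hvanish hA hA') y).symm⟩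
  · rw [hA, AnuVal_castSucc hvanish, exteriorPower.coe_map, hA']
  · cases ν with
    | zero => simp [Anu_eq_zero_of_degree_zero hA]
    | succ ν =>
      rw [coe_mem_secondSummand_iff] at hx ⊢
      obtain ⟨y, rfl⟩ := hx
      exact range_Anu_comp_mulι_map_incl_le hvanish hA ⟨y, rfl⟩
  · rintro ν rfl A'' hA''
    refine ⟨fun ι => ?_, ?_⟩
    · rw [show (fun a : Fin (ν + 1) => if h : (a : ℕ) < ν then (ι ⟨a, h⟩).castSucc else Fin.last n) =
        Fin.snoc (fun a => (ι a).castSucc) (Fin.last n) from rfl, hA, AnuVal_snoc hvanish,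
        exteriorPower.coe_mulι, exteriorPower.coe_map, hA'']
    · rw [LinearMap.trace_comp_self_eq_of_comp_eq _ (Anu_comp_splitLastEquiv hvanish hA hA' hA''),
        LinearMap.prodMap_comp, LinearMap.trace_prodMap']
  · rintro rfl
    simp [Anu_eq_zero_of_degree_zero hA, Anu_eq_zero_of_degree_zero hA']

/-- Pascal-recurrence decomposition (Section 6 of the paper): if the algebraic curvature
tensor `R` on `ℝ^{n+1}` vanishes whenever an index equals `n+1` and `R'` is its
restriction to `ℝ^n`, then the subspaces `Λ^ν(ℝ^n)` and `Λ^{ν-1}(ℝ^n) ∧ e_{n+1}` of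
`Λ^ν(ℝ^{n+1})` are invariant under `A_ν(R)`; the restriction of `A_ν(R)` to the first
summand is `A_ν(R')` (via the canonical embedding), the restriction to the second summand
is conjugate to `A_{ν-1}(R')` (via `x ↦ x ∧ e_{n+1}`), and
`Tr(A_ν(R)²) = Tr(A_ν(R')²) + Tr(A_{ν-1}(R')²)` (with `A_{-1} = 0` when `ν = 0`). -/
theorem trace_Anu_sq_product_decomposition (n ν : ℕ) (hn : 1 ≤ n) (hν : ν ≤ n + 1)
    (R : Fin (n + 1) → Fin (n + 1) → Fin (n + 1) → Fin (n + 1) → ℝ)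
    (hskew₁ : ∀ i j k l, R i j k l = - R j i k l)
    (hskew₂ : ∀ i j k l, R i j k l = - R i j l k)
    (hpair : ∀ i j k l, R i j k l = R k l i j)
    (hbianchi : ∀ i j k l, R i j k l + R i k l j + R i l j k = 0)
    (hvanish : ∀ i j k l,
      (i = Fin.last n ∨ j = Fin.last n ∨ k = Fin.last n ∨ l = Fin.last n) →
        R i j k l = 0)
    (A : ⋀[ℝ]^ν (Fin (n + 1) → ℝ) →ₗ[ℝ] ⋀[ℝ]^ν (Fin (n + 1) → ℝ))
    (hA : ∀ ι : Fin ν → Fin (n + 1), A (stdWedge (n + 1) ν ι) = AnuVal (n + 1) ν R ι)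
    (A' : ⋀[ℝ]^ν (Fin n → ℝ) →ₗ[ℝ] ⋀[ℝ]^ν (Fin n → ℝ))
    (hA' : ∀ ι : Fin ν → Fin n,
      A' (stdWedge n ν ι) =
        AnuVal n ν
          (fun i j k l => R i.castSucc j.castSucc k.castSucc l.castSucc) ι) :
    -- invariance of the first summand `Λ^ν(ℝ^n)`
    (∀ x : ⋀[ℝ]^ν (Fin (n + 1) → ℝ),
      (x : ExteriorAlgebra ℝ (Fin (n + 1) → ℝ)) ∈ firstSummand n ν →
        ((A x : ExteriorAlgebra ℝ (Fin (n + 1) → ℝ)) ∈ firstSummand n ν)) ∧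
    -- the restriction of `A_ν(R)` to the first summand is `A_ν(R')`
    (∀ ι : Fin ν → Fin n,
      (A (stdWedge (n + 1) ν (fun a => (ι a).castSucc)) :
          ExteriorAlgebra ℝ (Fin (n + 1) → ℝ)) =
        ExteriorAlgebra.map (incl n)
          (A' (stdWedge n ν ι) : ExteriorAlgebra ℝ (Fin n → ℝ))) ∧
    -- invariance of the second summand `Λ^{ν-1}(ℝ^n) ∧ e_{n+1}`
    (∀ x : ⋀[ℝ]^ν (Fin (n + 1) → ℝ),
      (x : ExteriorAlgebra ℝ (Fin (n + 1) → ℝ)) ∈ secondSummand n ν →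
        ((A x : ExteriorAlgebra ℝ (Fin (n + 1) → ℝ)) ∈ secondSummand n ν)) ∧
    -- for `ν = ν' + 1`: the restriction to the second summand is conjugate to
    -- `A_{ν-1}(R')` via `x ↦ x ∧ e_{n+1}`, and the trace identity holds
    (∀ ν' : ℕ, ν = ν' + 1 →
      ∀ A'' : ⋀[ℝ]^ν' (Fin n → ℝ) →ₗ[ℝ] ⋀[ℝ]^ν' (Fin n → ℝ),
        (∀ ι : Fin ν' → Fin n,
          A'' (stdWedge n ν' ι) =
            AnuVal n ν'
              (fun i j k l => R i.castSucc j.castSucc k.castSucc l.castSucc) ι) →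
        (∀ ι : Fin ν' → Fin n,
          (A (stdWedge (n + 1) ν
              (fun a => if h : (a : ℕ) < ν' then (ι ⟨a, h⟩).castSucc else Fin.last n)) :
              ExteriorAlgebra ℝ (Fin (n + 1) → ℝ)) =
            ExteriorAlgebra.map (incl n)
                (A'' (stdWedge n ν' ι) : ExteriorAlgebra ℝ (Fin n → ℝ)) *
              ExteriorAlgebra.ι ℝ (Pi.single (Fin.last n) (1 : ℝ))) ∧
        LinearMap.trace ℝ _ (A ∘ₗ A) =
          LinearMap.trace ℝ _ (A' ∘ₗ A') + LinearMap.trace ℝ _ (A'' ∘ₗ A'')) ∧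
    -- for `ν = 0` the second summand does not contribute (`A_{-1} = 0`)
    (ν = 0 → LinearMap.trace ℝ _ (A ∘ₗ A) = LinearMap.trace ℝ _ (A' ∘ₗ A')) :=
  trace_Anu_sq_product_decomposition_general n ν R hvanish A hA A' hA'
end
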